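/- arXiv:2011.04388 — 3 statements merged into one kernel-verified Lean document; each statement's English description precedes it below -/
import Mathlib

section
/- Let x ∈ ℝ. Define the third version of the third-order Pell polynomials σ : ℕ → ℝ by σ 0 = 3, σ 1 = 2x, σ 2 = 4x², and σ n = 2x·σ(n-1) + σ(n-3) for n ≥ 3. Then for every n ≥ 1, σ n = ∑_{ℓ=0}^{⌊n/3⌋} (n/(n-2ℓ)) · binomial(n-2ℓ, ℓ) · (2x)^{n-3ℓ}, where the coefficient n/(n-2ℓ)·binomial(n-2ℓ,ℓ) is interpreted as a real number (the denominator n-2ℓ is a positive integer for all ℓ in the summation range when n ≥ 1). -/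
/-!
With `c(n, ℓ) = n / (n - 2ℓ) · C(n - 2ℓ, ℓ)`, the coefficients obey the Pascal-type rule
`c(n + 3, ℓ + 1) = c(n + 2, ℓ + 1) + c(n, ℓ)` for `n ≥ 1`: put `m + 1 = n - 2ℓ`, clear denominators,
and it reduces to Pascal's rule plus `(m + 1 - ℓ) C(m + 1, ℓ) = (ℓ + 1) C(m + 1, ℓ + 1)`. Hence the
closed form satisfies the recurrence of `σ`, and both agree at `n = 1, 2, 3`. The closed form is `0`
at `n = 0` (junk `0 / 0`), so the comparison starts at `n = 1`.
-/

open Finset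

theorem eq_of_recurrence {R : Type*} [Semiring R] {a : R} {u v : ℕ → R}
    (hu : ∀ n, u (n + 3) = a * u (n + 2) + u n) (hv : ∀ n, v (n + 3) = a * v (n + 2) + v n)
    (h0 : u 0 = v 0) (h1 : u 1 = v 1) (h2 : u 2 = v 2) : u = v := by
  funext n
  induction n using Nat.strong_induction_on with
  | _ n ih =>
    match n with
    | 0 => exact h0
    | 1 => exact h1
    | 2 => exact h2
    | n + 3 => rw [hu, hv, ih n (by omega), ih (n + 2) (by omega)]

noncomputable def pellCoeff (n ℓ : ℕ) : ℝ :=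
  (n : ℝ) / ((n : ℝ) - 2 * ℓ) * (Nat.choose (n - 2 * ℓ) ℓ : ℝ)

theorem pellCoeff_eq_zero {n ℓ : ℕ} (h : n < 3 * ℓ) : pellCoeff n ℓ = 0 := by
  simp [pellCoeff, Nat.choose_eq_zero_of_lt (by omega : n - 2 * ℓ < ℓ)]

theorem pellCoeff_zero_right {n : ℕ} (hn : n ≠ 0) : pellCoeff n 0 = 1 := by
  simp [pellCoeff, hn]

theorem pellCoeff_add_three {n : ℕ} (hn : 1 ≤ n) (ℓ : ℕ) :
    pellCoeff (n + 3) (ℓ + 1) = pellCoeff (n + 2) (ℓ + 1) + pellCoeff n ℓ := by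
  by_cases hlt : n < 3 * ℓ
  · rw [pellCoeff_eq_zero hlt, pellCoeff_eq_zero (by omega), pellCoeff_eq_zero (by omega)]
    simp
  obtain ⟨m, rfl⟩ : ∃ m, n = 2 * ℓ + m + 1 := ⟨n - 2 * ℓ - 1, by omega⟩
  have hℓ : ℓ ≤ m + 1 := by omega
  have hratio : ((m + 1 - ℓ : ℕ) : ℝ) * (m + 1).choose ℓ = (ℓ + 1) * (m + 1).choose (ℓ + 1) := by
    exact_mod_cast by rw [mul_comm, ← Nat.choose_succ_right_eq, mul_comm]
  push_cast [Nat.cast_sub hℓ] at hratio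
  simp only [pellCoeff,
    show 2 * ℓ + m + 1 + 3 - 2 * (ℓ + 1) = m + 2 by omega,
    show 2 * ℓ + m + 1 + 2 - 2 * (ℓ + 1) = m + 1 by omega,
    show 2 * ℓ + m + 1 - 2 * ℓ = m + 1 by omega, Nat.choose_succ_succ' (m + 1) ℓ]
  push_cast
  rw [show (2 * ℓ + m + 1 + 3 : ℝ) - 2 * (ℓ + 1) = m + 2 by ring,
    show (2 * ℓ + m + 1 + 2 : ℝ) - 2 * (ℓ + 1) = m + 1 by ring,
    show (2 * ℓ + m + 1 : ℝ) - 2 * ℓ = m + 1 by ring]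
  field_simp
  linear_combination 2 * hratio

noncomputable def pellSum (t : ℝ) (n : ℕ) : ℝ :=
  ∑ ℓ ∈ range (n / 3 + 1), pellCoeff n ℓ * t ^ (n - 3 * ℓ)

theorem pellSum_eq_sum_range (t : ℝ) {n N : ℕ} (hN : n / 3 < N) :
    pellSum t n = ∑ ℓ ∈ range N, pellCoeff n ℓ * t ^ (n - 3 * ℓ) := by
  refine sum_subset (range_subset_range.2 (by omega)) fun ℓ _ hℓ => ?_
  rw [pellCoeff_eq_zero (by simp at hℓ; omega), zero_mul]

theorem pellCoeff_mul_pow_add_three (t : ℝ) {n : ℕ} (hn : 1 ≤ n) (ℓ : ℕ) :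
    pellCoeff (n + 3) (ℓ + 1) * t ^ (n + 3 - 3 * (ℓ + 1)) =
      t * (pellCoeff (n + 2) (ℓ + 1) * t ^ (n + 2 - 3 * (ℓ + 1))) +
        pellCoeff n ℓ * t ^ (n - 3 * ℓ) := by
  rw [pellCoeff_add_three hn, show n + 3 - 3 * (ℓ + 1) = n - 3 * ℓ by omega]
  by_cases hlt : n ≤ 3 * ℓ
  · rw [pellCoeff_eq_zero (by omega)]
    ring
  · rw [show n - 3 * ℓ = n + 2 - 3 * (ℓ + 1) + 1 by omega]
    ring

theorem pellSum_eq_pow_add_sum (t : ℝ) {n N : ℕ} (hn : n ≠ 0) (hN : n / 3 < N + 1) :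
    pellSum t n = t ^ n + ∑ ℓ ∈ range N, pellCoeff n (ℓ + 1) * t ^ (n - 3 * (ℓ + 1)) := by
  rw [pellSum_eq_sum_range t hN, sum_range_succ', pellCoeff_zero_right hn, one_mul, mul_zero,
    Nat.sub_zero, add_comm]

theorem pellSum_add_three (t : ℝ) {n : ℕ} (hn : 1 ≤ n) :
    pellSum t (n + 3) = t * pellSum t (n + 2) + pellSum t n := by
  rw [pellSum_eq_pow_add_sum t (N := n + 1) (by omega) (by omega),
    pellSum_eq_pow_add_sum t (n := n + 2) (N := n + 1) (by omega) (by omega),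
    pellSum_eq_sum_range t (N := n + 1) (by omega),
    sum_congr rfl fun ℓ _ => pellCoeff_mul_pow_add_three t hn ℓ, sum_add_distrib, mul_add, mul_sum]
  ring

theorem pellSum_one (t : ℝ) : pellSum t 1 = t := by
  simp [pellSum, pellCoeff]

theorem pellSum_two (t : ℝ) : pellSum t 2 = t ^ 2 := by
  simp [pellSum, pellCoeff]

theorem pellSum_three (t : ℝ) : pellSum t 3 = t ^ 3 + 3 := by
  norm_num [pellSum, pellCoeff, sum_range_succ]

theorem third_order_pell_third_version_explicit_formula
    (x : ℝ) (σ : ℕ → ℝ)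
    (h0 : σ 0 = 3) (h1 : σ 1 = 2 * x) (h2 : σ 2 = 4 * x ^ 2)
    (hrec : ∀ n, 3 ≤ n → σ n = 2 * x * σ (n - 1) + σ (n - 3)) :
    ∀ n, 1 ≤ n →
      σ n = ∑ ℓ ∈ Finset.range (n / 3 + 1),
        ((n : ℝ) / ((n : ℝ) - 2 * ℓ)) * (Nat.choose (n - 2 * ℓ) ℓ : ℝ) *
          (2 * x) ^ (n - 3 * ℓ) := by
  have hshift : (fun n => σ (n + 1)) = fun n => pellSum (2 * x) (n + 1) := by
    refine eq_of_recurrence (a := 2 * x) (fun n => hrec (n + 4) (by omega))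
      (fun n => pellSum_add_three _ (by omega)) ?_ ?_ ?_
    · rw [h1, pellSum_one]
    · rw [h2, pellSum_two]
      ring
    · rw [hrec 3 le_rfl, pellSum_three]
      norm_num [h0, h2]
      ring
  intro n hn
  obtain ⟨n, rfl⟩ := Nat.exists_eq_add_of_le' hn
  exact congrFun hshift n
end

section
/- Let V ∈ ℚ[[z]] be a formal power series with constant coefficient 0 satisfying V·(V-2)² = z. Then for every n ≥ 1, the coefficient of zⁿ in V equals (1/n)·binomial(3n-2, n-1)·(1/2^{3n-1}). -/
/-!
Differentiating `V (V - 2)² = X` expresses `V'` and `V''` rationally in `V` and `X`, with the common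
denominator `16 - 8V - 9X`; eliminating `V` shows that `V` solves the hypergeometric equation
`(32 - 27X) X V'' + (16 - 27X) V' + 3V = 4`. Comparing coefficients gives a two-term recurrence
`16 (k+2)(2k+3) a_{k+2} = 3 (3k+2)(3k+4) a_{k+1}` with `a_1 = 1/4`, which the binomial formula solves.
-/

open PowerSeries

namespace PowerSeries

@[simp]
lemma coeff_ofNat_mul {R : Type*} [Semiring R] (n m : ℕ) [m.AtLeastTwo] (f : R⟦X⟧) :
    coeff n ((ofNat(m) : R⟦X⟧) * f) = ofNat(m) * coeff n f := by
  rw [← map_ofNat C, coeff_C_mul]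

@[simp]
lemma coeff_ofNat {R : Type*} [Semiring R] (n m : ℕ) [m.AtLeastTwo] :
    coeff n (ofNat(m) : R⟦X⟧) = if n = 0 then ofNat(m) else 0 := by
  rw [← map_ofNat C, coeff_C]

@[simp]
lemma derivative_ofNat {R : Type*} [CommSemiring R] (n : ℕ) [n.AtLeastTwo] :
    d⁄dX R (ofNat(n) : R⟦X⟧) = 0 := by
  rw [← Nat.cast_ofNat]
  exact (d⁄dX R).map_natCast n

lemma coeff_X_mul_derivative {R : Type*} [CommSemiring R] (f : R⟦X⟧) (n : ℕ) :
    coeff n (X * d⁄dX R f) = n * coeff n f := by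
  rcases n with _ | n
  · simp
  · rw [coeff_succ_X_mul, coeff_derivative, mul_comm, Nat.cast_succ]

end PowerSeries

lemma Nat.choose_three_mul_add_four_recurrence (m : ℕ) :
    2 * (m + 1) * (2 * m + 3) * (3 * m + 4).choose (m + 1) =
      3 * (3 * m + 2) * (3 * m + 4) * (3 * m + 1).choose m := by
  have h₁ : (3 * m + 4) * (3 * m + 3).choose m = (3 * m + 4).choose (m + 1) * (m + 1) :=
    Nat.add_one_mul_choose_eq _ _
  have h₂ : (3 * m + 2).choose m * (3 * m + 3) = (3 * m + 3).choose m * (2 * m + 3) := by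
    rw [Nat.choose_mul_succ_eq]; congr 2; omega
  have h₃ : (3 * m + 1).choose m * (3 * m + 2) = (3 * m + 2).choose m * (2 * m + 2) := by
    rw [Nat.choose_mul_succ_eq]; congr 2; omega
  calc 2 * (m + 1) * (2 * m + 3) * (3 * m + 4).choose (m + 1)
      = 2 * (2 * m + 3) * ((3 * m + 4) * (3 * m + 3).choose m) := by rw [h₁]; ring
    _ = 2 * (3 * m + 4) * ((3 * m + 2).choose m * (3 * m + 3)) := by rw [h₂]; ring
    _ = 3 * (3 * m + 4) * ((3 * m + 2).choose m * (2 * m + 2)) := by ring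
    _ = 3 * (3 * m + 2) * (3 * m + 4) * (3 * m + 1).choose m := by rw [← h₃]; ring

theorem ode_of_mul_sub_two_sq_eq_X {R : Type*} [CommRing R] [IsDomain R] [CharZero R]
    {V : R⟦X⟧} (h0 : constantCoeff V = 0) (hV : V * (V - 2) ^ 2 = X) :
    (32 - 27 * X) * X * d⁄dX R (d⁄dX R V) + (16 - 27 * X) * d⁄dX R V + 3 * V - 4 = 0 := by
  set P := d⁄dX R V
  -- `D` is `(4 - 3V)(3V² - 8V + 4)` reduced modulo `V (V - 2)² = X`.
  set D : R⟦X⟧ := 16 - 8 * V - 9 * X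
  have hD : D ≠ 0 := fun h ↦ by simpa [D, h0, map_ofNat] using congrArg constantCoeff h
  have hP : (3 * V ^ 2 - 8 * V + 4) * P = 1 := by
    have h := congrArg (d⁄dX R) hV
    simp only [Derivation.leibniz, Derivation.leibniz_pow, Nat.add_one_sub_one, pow_one, map_sub,
      derivative_ofNat, sub_zero, smul_eq_mul, nsmul_eq_mul, Nat.cast_ofNat, derivative_X] at h
    linear_combination h
  have hDP : D * P = 4 - 3 * V := by
    linear_combination (4 - 3 * V) * hP + 9 * P * hV
  have hDQ : D * d⁄dX R P = 8 * P ^ 2 + 6 * P := by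
    have h := congrArg (d⁄dX R) hDP
    simp only [Derivation.leibniz, smul_eq_mul, map_sub, derivative_ofNat, mul_zero, add_zero,
      zero_sub, derivative_X, mul_one, D] at h
    linear_combination h
  have hB : (32 - 27 * X) * X * (8 * P + 6) + D * (16 - 27 * X) - D ^ 2 = 0 := by
    refine (mul_eq_zero.mp ?_).resolve_left hD
    -- after replacing `D P` by `4 - 3V`, `D` times the left side is `512 (V (V - 2)² - X)`
    linear_combination 8 * (32 - 27 * X) * X * hDP + 512 * hV
  refine (mul_eq_zero.mp ?_).resolve_left hD
  linear_combination (32 - 27 * X) * X * hDQ + D * hDP + P * hB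

section
variable {R : Type*} [CommRing R] {V : R⟦X⟧}

lemma coeff_one_of_ode
    (hV : (32 - 27 * X) * X * d⁄dX R (d⁄dX R V) + (16 - 27 * X) * d⁄dX R V + 3 * V - 4 = 0) :
    16 * coeff 1 V + 3 * coeff 0 V = 4 := by
  have h := congrArg (coeff 0) hV
  simp only [sub_mul, mul_assoc, map_sub, map_add, coeff_ofNat_mul, coeff_zero_X_mul,
    coeff_derivative, coeff_ofNat, if_pos, map_zero] at h
  linear_combination h

lemma coeff_succ_succ_of_ode
    (hV : (32 - 27 * X) * X * d⁄dX R (d⁄dX R V) + (16 - 27 * X) * d⁄dX R V + 3 * V - 4 = 0)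
    (k : ℕ) :
    16 * (k + 2) * (2 * k + 3) * coeff (k + 2) V =
      3 * (3 * k + 2) * (3 * k + 4) * coeff (k + 1) V := by
  have h := congrArg (coeff (k + 1)) hV
  simp only [sub_mul, mul_assoc, map_sub, map_add, coeff_ofNat_mul, coeff_succ_X_mul,
    coeff_derivative, Nat.cast_add, Nat.cast_one, coeff_X_mul_derivative, coeff_ofNat,
    Nat.add_eq_zero_iff, one_ne_zero, and_false, if_false, sub_zero, map_zero] at h
  linear_combination h

end

lemma two_pow_mul_eq_choose_of_recurrence {K : Type*} [Field K] [CharZero K] {a : ℕ → K}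
    (h₁ : 4 * a 1 = 1)
    (hrec : ∀ k : ℕ, 16 * (k + 2) * (2 * k + 3) * a (k + 2) =
      3 * (3 * k + 2) * (3 * k + 4) * a (k + 1))
    (m : ℕ) :
    2 ^ (3 * m + 2) * (m + 1) * a (m + 1) = (3 * m + 1).choose m := by
  induction m with
  | zero => norm_num [h₁]
  | succ m ih =>
    have hne : (2 * (m + 1) * (2 * m + 3) : K) ≠ 0 := by
      exact_mod_cast (by positivity : 2 * (m + 1) * (2 * m + 3) ≠ 0)
    have hchoose := congrArg (Nat.cast (R := K)) (Nat.choose_three_mul_add_four_recurrence m)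
    push_cast at hchoose
    apply mul_left_cancel₀ hne
    rw [show 3 * (m + 1) + 1 = 3 * m + 4 by ring]
    push_cast
    linear_combination 2 ^ (3 * m + 2) * ((m : K) + 1) * hrec m
      + 3 * (3 * (m : K) + 2) * (3 * m + 4) * ih - hchoose

theorem lagrange_inversion_coefficients
    (V : PowerSeries ℚ)
    (h0 : PowerSeries.coeff 0 V = 0)
    (hV : V * (V - 2) ^ 2 = PowerSeries.X) :
    ∀ n, 1 ≤ n →
      PowerSeries.coeff n V =
        (1 / (n : ℚ)) * (Nat.choose (3 * n - 2) (n - 1) : ℚ) *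
          (1 / 2 ^ (3 * n - 1)) := by
  intro n hn
  obtain ⟨m, rfl⟩ := Nat.exists_eq_add_of_le' hn
  have hode := ode_of_mul_sub_two_sq_eq_X (by simpa using h0) hV
  have h₁ : 4 * coeff 1 V = 1 := by linear_combination (coeff_one_of_ode hode - 3 * h0) / 4
  have key := two_pow_mul_eq_choose_of_recurrence (a := (coeff · V)) h₁
    (coeff_succ_succ_of_ode hode) m
  rw [show 3 * (m + 1) - 2 = 3 * m + 1 by omega, show 3 * (m + 1) - 1 = 3 * m + 2 by omega,
    Nat.add_sub_cancel]
  push_cast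
  field_simp
  linear_combination key
end

section
/- Let R be a commutative ring and x ∈ R. Define r : ℕ → R by r 0 = 0, r 1 = 1, r 2 = 2x, and r n = 2x·r(n-1) + r(n-3) for n ≥ 3. Then for every n ≥ 1, r n = ∑_{ℓ=0}^{⌊(n-1)/3⌋} binomial(n-1-2ℓ, ℓ)·2^{n-1-3ℓ}·x^{n-1-3ℓ}, so that (taking R = ℤ[x]) the polynomial r n has degree n-1 with leading coefficient 2^{n-1}, and every exponent of x occurring in r n is congruent to n-1 modulo 3. -/
open Polynomial Finset

/-- The `ℓ`-th term of the explicit formula with top power `k`. -/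
noncomputable def pellTerm (k ℓ : ℕ) : Polynomial ℤ :=
  (Nat.choose (k - 2 * ℓ) ℓ : Polynomial ℤ) * 2 ^ (k - 3 * ℓ) * X ^ (k - 3 * ℓ)

/-- The explicit polynomial, with a padded summation range. -/
noncomputable def pellQ (k : ℕ) : Polynomial ℤ := ∑ ℓ ∈ range (k + 1), pellTerm k ℓ

lemma pellChoose_zero {k ℓ : ℕ} (h : k < 3 * ℓ) (_h1 : 1 ≤ ℓ) :
    Nat.choose (k - 2 * ℓ) ℓ = 0 :=
  Nat.choose_eq_zero_of_lt (by omega)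

lemma pellTerm_zero {k ℓ : ℕ} (h : k < 3 * ℓ) (h1 : 1 ≤ ℓ) : pellTerm k ℓ = 0 := by
  simp [pellTerm, pellChoose_zero h h1]

lemma pellTerm_key (j ℓ : ℕ) :
    pellTerm (j + 3) (ℓ + 1) = 2 * X * pellTerm (j + 2) (ℓ + 1) + pellTerm j ℓ := by
  rcases lt_trichotomy (3 * ℓ) j with h | h | h
  · have e1 : j + 3 - 2 * (ℓ + 1) = (j - 2 * ℓ) + 1 := by omega
    have e2 : j + 3 - 3 * (ℓ + 1) = j - 3 * ℓ := by omega
    have e3 : j + 2 - 2 * (ℓ + 1) = j - 2 * ℓ := by omega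
    have e4 : j + 2 - 3 * (ℓ + 1) = (j - 3 * ℓ) - 1 := by omega
    have e5 : j - 3 * ℓ = ((j - 3 * ℓ) - 1) + 1 := by omega
    rw [pellTerm, pellTerm, pellTerm, e1, e2, e3, e4, Nat.choose_succ_succ]
    rw [e5]
    push_cast
    ring
  · have e1 : j + 3 - 2 * (ℓ + 1) = ℓ + 1 := by omega
    have e2 : j + 3 - 3 * (ℓ + 1) = 0 := by omega
    have e3 : j + 2 - 2 * (ℓ + 1) = ℓ := by omega
    have e4 : j - 2 * ℓ = ℓ := by omega
    have e5 : j - 3 * ℓ = 0 := by omega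
    rw [pellTerm, pellTerm, pellTerm, e1, e2, e3, e4, e5]
    simp [Nat.choose_succ_self]
  · have h1 : 1 ≤ ℓ := by omega
    rw [pellTerm_zero (by omega) (by omega), pellTerm_zero (by omega) (by omega),
      pellTerm_zero h h1]
    ring

lemma pellQ_rec (j : ℕ) : pellQ (j + 3) = 2 * X * pellQ (j + 2) + pellQ j := by
  have expand : pellQ (j + 3)
      = pellTerm (j + 3) 0 + ∑ ℓ ∈ range (j + 3), pellTerm (j + 3) (ℓ + 1) := by
    rw [pellQ, Finset.sum_range_succ']
    ring
  rw [expand]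
  have step : ∑ ℓ ∈ range (j + 3), pellTerm (j + 3) (ℓ + 1)
      = 2 * X * ∑ ℓ ∈ range (j + 3), pellTerm (j + 2) (ℓ + 1)
        + ∑ ℓ ∈ range (j + 3), pellTerm j ℓ := by
    rw [Finset.mul_sum, ← Finset.sum_add_distrib]
    exact Finset.sum_congr rfl fun ℓ _ => pellTerm_key j ℓ
  rw [step]
  have eA : ∑ ℓ ∈ range (j + 3), pellTerm (j + 2) (ℓ + 1)
      = pellQ (j + 2) - pellTerm (j + 2) 0 := by
    rw [Finset.sum_range_succ, pellTerm_zero (k := j + 2) (ℓ := j + 3) (by omega) (by omega)]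
    have : pellQ (j + 2) = pellTerm (j + 2) 0 + ∑ ℓ ∈ range (j + 2), pellTerm (j + 2) (ℓ + 1) := by
      rw [pellQ, Finset.sum_range_succ']; ring
    rw [this]; ring
  have eB : ∑ ℓ ∈ range (j + 3), pellTerm j ℓ = pellQ j := by
    rw [pellQ]
    rw [show j + 3 = (j + 1) + 2 by ring, Finset.sum_range_succ, Finset.sum_range_succ,
      pellTerm_zero (by omega) (by omega), pellTerm_zero (by omega) (by omega)]
    ring
  rw [eA, eB]
  have e0 : pellTerm (j + 3) 0 = 2 * X * pellTerm (j + 2) 0 := by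
    rw [pellTerm, pellTerm]
    simp
    ring
  rw [e0]
  ring

lemma pellTerm_coeff (k ℓ m : ℕ) :
    (pellTerm k ℓ).coeff m
      = if m = k - 3 * ℓ then (Nat.choose (k - 2 * ℓ) ℓ : ℤ) * 2 ^ (k - 3 * ℓ) else 0 := by
  have : pellTerm k ℓ
      = C ((Nat.choose (k - 2 * ℓ) ℓ : ℤ) * 2 ^ (k - 3 * ℓ)) * X ^ (k - 3 * ℓ) := by
    rw [pellTerm]
    have h2 : (C 2 : Polynomial ℤ) = 2 := by norm_num
    simp only [map_mul, map_pow, Polynomial.C_eq_natCast, h2]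
  rw [this, coeff_C_mul, coeff_X_pow]
  split <;> simp [*]

lemma pellQ_coeff_top (k : ℕ) : (pellQ k).coeff k = 2 ^ k := by
  rw [pellQ, finset_sum_coeff]
  rw [Finset.sum_eq_single 0]
  · simp [pellTerm_coeff]
  · intro ℓ _ hℓ
    rcases le_or_gt (3 * ℓ) k with h | h
    · rw [pellTerm_coeff]
      rw [if_neg (by omega)]
    · rw [pellTerm_zero h (by omega)]; simp
  · intro h; simp at h

lemma pellQ_coeff_zero (k m : ℕ) (h : k < m) : (pellQ k).coeff m = 0 := by
  rw [pellQ, finset_sum_coeff]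
  refine Finset.sum_eq_zero fun ℓ _ => ?_
  rw [pellTerm_coeff, if_neg (by omega)]

lemma pellQ_natDegree (k : ℕ) : (pellQ k).natDegree = k := by
  refine le_antisymm ?_ ?_
  · exact natDegree_le_iff_coeff_eq_zero.2 fun m hm => pellQ_coeff_zero k m hm
  · refine le_natDegree_of_ne_zero ?_
    rw [pellQ_coeff_top]
    positivity

lemma pellQ_mod (k m : ℕ) (h : (pellQ k).coeff m ≠ 0) : m % 3 = k % 3 := by
  rw [pellQ, finset_sum_coeff] at h
  obtain ⟨ℓ, -, hℓ⟩ := Finset.exists_ne_zero_of_sum_ne_zero h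
  rw [pellTerm_coeff] at hℓ
  by_cases hm : m = k - 3 * ℓ
  · rcases le_or_gt (3 * ℓ) k with h3 | h3
    · omega
    · rcases Nat.eq_zero_or_pos ℓ with h0 | h0
      · omega
      · rw [if_pos hm, pellChoose_zero h3 h0] at hℓ
        simp at hℓ
  · rw [if_neg hm] at hℓ; exact absurd rfl hℓ

lemma pellQ_formula (k : ℕ) :
    pellQ k = ∑ ℓ ∈ Finset.range (k / 3 + 1), pellTerm k ℓ := by
  rw [pellQ]
  symm
  refine Finset.sum_subset (Finset.range_subset_range.2 (by omega)) ?_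
  intro ℓ _ hℓ
  simp only [Finset.mem_range, not_lt] at hℓ
  exact pellTerm_zero (by omega) (by omega)

theorem third_order_pell_polynomial_structure
    (r : ℕ → Polynomial ℤ)
    (h0 : r 0 = 0) (h1 : r 1 = 1) (h2 : r 2 = 2 * Polynomial.X)
    (hrec : ∀ n, 3 ≤ n → r n = 2 * Polynomial.X * r (n - 1) + r (n - 3)) :
    ∀ n, 1 ≤ n →
      r n = ∑ ℓ ∈ Finset.range ((n - 1) / 3 + 1),
          (Nat.choose (n - 1 - 2 * ℓ) ℓ : Polynomial ℤ) * 2 ^ (n - 1 - 3 * ℓ) *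
            Polynomial.X ^ (n - 1 - 3 * ℓ) ∧
        (r n).natDegree = n - 1 ∧
        (r n).leadingCoeff = 2 ^ (n - 1) ∧
        ∀ m, (r n).coeff m ≠ 0 → m % 3 = (n - 1) % 3 := by
  have key : ∀ k, r (k + 1) = pellQ k := by
    intro k
    induction k using Nat.strong_induction_on with
    | _ k ih =>
      match k with
      | 0 =>
        rw [h1, pellQ]
        simp [pellTerm]
      | 1 =>
        rw [h2, pellQ]
        rw [Finset.sum_range_succ, Finset.sum_range_one,
          pellTerm_zero (k := 1) (ℓ := 1) (by omega) (by omega)]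
        simp [pellTerm]
      | 2 =>
        have h3 : r 3 = 2 * X * r 2 + r 0 := hrec 3 (by omega)
        rw [h3, h2, h0, pellQ]
        rw [Finset.sum_range_succ, Finset.sum_range_succ, Finset.sum_range_one,
          pellTerm_zero (k := 2) (ℓ := 1) (by omega) (by omega),
          pellTerm_zero (k := 2) (ℓ := 2) (by omega) (by omega)]
        simp [pellTerm]
        ring
      | (j + 3) =>
        have hr : r (j + 4) = 2 * X * r (j + 3) + r (j + 1) := by
          have := hrec (j + 4) (by omega)
          simpa using this
        rw [show j + 3 + 1 = j + 4 by ring] at *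
        rw [hr, ih (j + 2) (by omega), ih j (by omega), pellQ_rec]
  intro n hn
  obtain ⟨k, rfl⟩ : ∃ k, n = k + 1 := ⟨n - 1, by omega⟩
  have hk : k + 1 - 1 = k := rfl
  rw [key k, hk]
  refine ⟨?_, pellQ_natDegree k, ?_, fun m hm => pellQ_mod k m hm⟩
  · rw [pellQ_formula]
    exact Finset.sum_congr rfl fun ℓ _ => by rw [pellTerm]
  · rw [Polynomial.leadingCoeff, pellQ_natDegree, pellQ_coeff_top]
end
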